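/- Let P be a p×p permutation matrix, L a p×p real unit lower-triangular matrix, Q a p×p real orthogonal matrix, and Λ a real diagonal matrix, and set H̄ = Pᵀ L Q Λ Qᵀ Lᵀ P. Assume H̄ is positive definite with λ_min(H̄) ≥ λ̲ > 0 and ‖H̄‖₂ ≤ λ̄ for constants 0 < λ̲ ≤ λ̄. Let τ > 0, let Λ̄ be the clipped diagonal matrix with entries max{τ, |λ_j|}, and set H̄̄ = Pᵀ L Q Λ̄ Qᵀ Lᵀ P. Then the condition number of H̄̄ satisfies κ(H̄̄) = λ_max(H̄̄)/λ_min(H̄̄) ≤ (σ_max(L)²/σ_min(L)²) · max{τ, λ̄/σ_min(L)²} / max{τ, λ̲/σ_max(L)²}. -/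

import Mathlib

/-!
Write `H̄ = Mᵀ Λ M` with `M = Qᵀ Lᵀ P`. As `P` and `Q` are orthogonal and `Lᵀ` has the same
extreme singular values as `L`, `σ_min(L) ‖x‖ ≤ ‖M x‖ ≤ σ_max(L) ‖x‖`. Evaluating the quadratic
form of `H̄` at `x = M⁻¹ e_j` gives `λ_j`, while `‖x‖²` lies between `σ_max(L)⁻²` and
`σ_min(L)⁻²`; hence `λ̲ / σ_max(L)² ≤ λ_j ≤ λ̄ / σ_min(L)²`. In particular every `λ_j` is
positive, so clipping sends it into `[max{τ, λ̲/σ_max(L)²}, max{τ, λ̄/σ_min(L)²}]`, and the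
Rayleigh quotient of `H̄̄ = Mᵀ Λ̄ M` lies between `σ_min(L)²` times the lower and `σ_max(L)²`
times the upper end of that interval.
-/

open Matrix

/-- The Euclidean norm on `ℝ^p` (vectors identified with `Fin p → ℝ`). -/
noncomputable def euclNorm {p : ℕ} (x : Fin p → ℝ) : ℝ := Real.sqrt (∑ i, x i ^ 2)

/-- The smallest eigenvalue of a symmetric real matrix, characterized as the infimum
of the Rayleigh quotient `xᵀ A x / (xᵀ x)` over nonzero `x`. -/
noncomputable def lambdaMin {p : ℕ} (A : Matrix (Fin p) (Fin p) ℝ) : ℝ :=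
  ⨅ x : {x : Fin p → ℝ // x ≠ 0}, x.1 ⬝ᵥ A.mulVec x.1 / euclNorm x.1 ^ 2

/-- The largest eigenvalue of a symmetric real matrix, characterized as the supremum
of the Rayleigh quotient `xᵀ A x / (xᵀ x)` over nonzero `x`. -/
noncomputable def lambdaMax {p : ℕ} (A : Matrix (Fin p) (Fin p) ℝ) : ℝ :=
  ⨆ x : {x : Fin p → ℝ // x ≠ 0}, x.1 ⬝ᵥ A.mulVec x.1 / euclNorm x.1 ^ 2

/-- The smallest singular value of a real matrix `L`, characterized as the infimum of
`‖L x‖ / ‖x‖` over nonzero `x`. -/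
noncomputable def sigmaMin {p : ℕ} (L : Matrix (Fin p) (Fin p) ℝ) : ℝ :=
  ⨅ x : {x : Fin p → ℝ // x ≠ 0}, euclNorm (L.mulVec x.1) / euclNorm x.1

/-- The largest singular value of a real matrix `L`, characterized as the supremum of
`‖L x‖ / ‖x‖` over nonzero `x`. -/
noncomputable def sigmaMax {p : ℕ} (L : Matrix (Fin p) (Fin p) ℝ) : ℝ :=
  ⨆ x : {x : Fin p → ℝ // x ≠ 0}, euclNorm (L.mulVec x.1) / euclNorm x.1


open scoped Matrix.Norms.L2Operator

section EuclNorm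

variable {p : ℕ}

lemma euclNorm_eq_norm (x : Fin p → ℝ) : euclNorm x = ‖WithLp.toLp 2 x‖ := by
  simp [euclNorm, EuclideanSpace.norm_eq]

@[simp]
lemma euclNorm_zero : euclNorm (0 : Fin p → ℝ) = 0 := by simp [euclNorm]

lemma euclNorm_nonneg (x : Fin p → ℝ) : 0 ≤ euclNorm x := Real.sqrt_nonneg _

lemma euclNorm_pos {x : Fin p → ℝ} (hx : x ≠ 0) : 0 < euclNorm x := by
  simpa [euclNorm_eq_norm] using hx

lemma euclNorm_sq (x : Fin p → ℝ) : euclNorm x ^ 2 = x ⬝ᵥ x := by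
  rw [euclNorm, Real.sq_sqrt (by positivity)]
  simp [dotProduct, sq]

lemma abs_dotProduct_le (x y : Fin p → ℝ) : |x ⬝ᵥ y| ≤ euclNorm x * euclNorm y := by
  simpa [euclNorm_eq_norm, EuclideanSpace.inner_toLp_toLp, dotProduct_comm] using
    abs_real_inner_le_norm (WithLp.toLp 2 x) (WithLp.toLp 2 y)

lemma euclNorm_mulVec_le_opNorm (A : Matrix (Fin p) (Fin p) ℝ) (x : Fin p → ℝ) :
    euclNorm (A *ᵥ x) ≤ ‖A‖ * euclNorm x := by
  simpa [euclNorm_eq_norm] using A.l2_opNorm_mulVec (WithLp.toLp 2 x)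

lemma euclNorm_mulVec_of_transpose_mul_self {A : Matrix (Fin p) (Fin p) ℝ} (hA : Aᵀ * A = 1)
    (x : Fin p → ℝ) : euclNorm (A *ᵥ x) = euclNorm x := by
  have h : euclNorm (A *ᵥ x) ^ 2 = euclNorm x ^ 2 := by
    rw [euclNorm_sq, euclNorm_sq, dotProduct_mulVec, ← mulVec_transpose, mulVec_mulVec, hA,
      one_mulVec]
  exact (pow_left_inj₀ (euclNorm_nonneg _) (euclNorm_nonneg _) two_ne_zero).1 h

lemma nonempty_ne_zero [NeZero p] : Nonempty {x : Fin p → ℝ // x ≠ 0} :=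
  nonempty_subtype.2 (exists_ne 0)

end EuclNorm

section Rayleigh

variable {p : ℕ}

def RayleighBetween (A : Matrix (Fin p) (Fin p) ℝ) (lo hi : ℝ) : Prop :=
  ∀ x, lo * euclNorm x ^ 2 ≤ x ⬝ᵥ A *ᵥ x ∧ x ⬝ᵥ A *ᵥ x ≤ hi * euclNorm x ^ 2

variable (A : Matrix (Fin p) (Fin p) ℝ)

lemma abs_rayleigh_le (x : {x : Fin p → ℝ // x ≠ 0}) :
    |x.1 ⬝ᵥ A *ᵥ x.1 / euclNorm x.1 ^ 2| ≤ ‖A‖ := by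
  have hx := euclNorm_pos x.2
  rw [abs_div, abs_of_pos (pow_pos hx 2), div_le_iff₀ (pow_pos hx 2)]
  calc |x.1 ⬝ᵥ A *ᵥ x.1| ≤ euclNorm x.1 * euclNorm (A *ᵥ x.1) := abs_dotProduct_le _ _
    _ ≤ euclNorm x.1 * (‖A‖ * euclNorm x.1) := by gcongr; exact euclNorm_mulVec_le_opNorm A _
    _ = ‖A‖ * euclNorm x.1 ^ 2 := by ring

lemma mul_euclNorm_sq_le_of_le_lambdaMin {c : ℝ} (h : c ≤ lambdaMin A) (x : Fin p → ℝ) :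
    c * euclNorm x ^ 2 ≤ x ⬝ᵥ A *ᵥ x := by
  rcases eq_or_ne x 0 with rfl | hx
  · simp
  rw [← le_div_iff₀ (pow_pos (euclNorm_pos hx) 2)]
  refine h.trans (ciInf_le ⟨-‖A‖, ?_⟩ (⟨x, hx⟩ : {x : Fin p → ℝ // x ≠ 0}))
  rintro _ ⟨y, rfl⟩
  exact neg_le_of_abs_le (abs_rayleigh_le A y)

lemma le_mul_euclNorm_sq_of_lambdaMax_le {c : ℝ} (h : lambdaMax A ≤ c) (x : Fin p → ℝ) :
    x ⬝ᵥ A *ᵥ x ≤ c * euclNorm x ^ 2 := by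
  rcases eq_or_ne x 0 with rfl | hx
  · simp
  rw [← div_le_iff₀ (pow_pos (euclNorm_pos hx) 2)]
  refine (le_ciSup ⟨‖A‖, ?_⟩ (⟨x, hx⟩ : {x : Fin p → ℝ // x ≠ 0})).trans h
  rintro _ ⟨y, rfl⟩
  exact (le_abs_self _).trans (abs_rayleigh_le A y)

lemma rayleighBetween_of_le_lambdaMin {A : Matrix (Fin p) (Fin p) ℝ} {lo hi : ℝ}
    (hlo : lo ≤ lambdaMin A) (hhi : lambdaMax A ≤ hi) : RayleighBetween A lo hi := fun x =>
  ⟨mul_euclNorm_sq_le_of_le_lambdaMin A hlo x, le_mul_euclNorm_sq_of_lambdaMax_le A hhi x⟩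
lemma lambdaMax_div_lambdaMin_le [NeZero p] {lo hi : ℝ} (hlo : 0 < lo)
    (h : RayleighBetween A lo hi) :
    lambdaMax A / lambdaMin A ≤ hi / lo := by
  have := nonempty_ne_zero (p := p)
  have hmin : lo ≤ lambdaMin A :=
    le_ciInf fun x => (le_div_iff₀ (pow_pos (euclNorm_pos x.2) 2)).2 (h x.1).1
  have hmax : lambdaMax A ≤ hi :=
    ciSup_le fun x => (div_le_iff₀ (pow_pos (euclNorm_pos x.2) 2)).2 (h x.1).2
  obtain ⟨x⟩ := this
  have hlohi : lo ≤ hi :=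
    le_of_mul_le_mul_right ((h x.1).1.trans (h x.1).2) (pow_pos (euclNorm_pos x.2) 2)
  exact div_le_div₀ (hlo.le.trans hlohi) hmax hlo hmin

end Rayleigh

section SingularValues

variable {p : ℕ} (L : Matrix (Fin p) (Fin p) ℝ)

lemma euclNorm_mulVec_le_sigmaMax (x : Fin p → ℝ) :
    euclNorm (L *ᵥ x) ≤ sigmaMax L * euclNorm x := by
  rcases eq_or_ne x 0 with rfl | hx
  · simp
  rw [← div_le_iff₀ (euclNorm_pos hx)]
  exact le_ciSup ⟨‖L‖, by
    rintro _ ⟨y, rfl⟩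
    exact div_le_of_le_mul₀ (euclNorm_nonneg y.1) (norm_nonneg L) (euclNorm_mulVec_le_opNorm L y.1)⟩
    (⟨x, hx⟩ : {x : Fin p → ℝ // x ≠ 0})

lemma sigmaMin_mul_le_euclNorm_mulVec (x : Fin p → ℝ) :
    sigmaMin L * euclNorm x ≤ euclNorm (L *ᵥ x) := by
  rcases eq_or_ne x 0 with rfl | hx
  · simp
  rw [← le_div_iff₀ (euclNorm_pos hx)]
  exact ciInf_le ⟨0, by
    rintro _ ⟨y, rfl⟩
    exact div_nonneg (euclNorm_nonneg (L *ᵥ y.1)) (euclNorm_nonneg y.1)⟩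
    (⟨x, hx⟩ : {x : Fin p → ℝ // x ≠ 0})

lemma sigmaMax_nonneg : 0 ≤ sigmaMax L :=
  Real.iSup_nonneg fun _ => div_nonneg (euclNorm_nonneg _) (euclNorm_nonneg _)

lemma sigmaMin_nonneg : 0 ≤ sigmaMin L :=
  Real.iInf_nonneg fun _ => div_nonneg (euclNorm_nonneg _) (euclNorm_nonneg _)

lemma sigmaMin_pos [NeZero p] {B : Matrix (Fin p) (Fin p) ℝ} (hB : B * L = 1) :
    0 < sigmaMin L := by
  have := nonempty_ne_zero (p := p)
  refine lt_of_lt_of_le (by positivity : 0 < 1 / (‖B‖ + 1)) (le_ciInf fun x => ?_)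
  have hBL : euclNorm x.1 ≤ ‖B‖ * euclNorm (L *ᵥ x.1) := by
    simpa [mulVec_mulVec, hB] using euclNorm_mulVec_le_opNorm B (L *ᵥ x.1)
  rw [div_le_div_iff₀ (by positivity) (euclNorm_pos x.2)]
  nlinarith [euclNorm_nonneg (L *ᵥ x.1)]

-- `‖Lᵀ x‖² = ⟪L (Lᵀ x), x⟫ ≤ σ_max(L) ‖Lᵀ x‖ ‖x‖`
lemma euclNorm_transpose_mulVec_le (x : Fin p → ℝ) :
    euclNorm (Lᵀ *ᵥ x) ≤ sigmaMax L * euclNorm x := by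
  set w := Lᵀ *ᵥ x
  have h : euclNorm w ^ 2 ≤ sigmaMax L * euclNorm x * euclNorm w :=
    calc euclNorm w ^ 2 = (L *ᵥ w) ⬝ᵥ x := by rw [euclNorm_sq, dotProduct_mulVec, vecMul_transpose]
      _ ≤ euclNorm (L *ᵥ w) * euclNorm x := (le_abs_self _).trans (abs_dotProduct_le _ _)
      _ ≤ sigmaMax L * euclNorm w * euclNorm x :=
        mul_le_mul_of_nonneg_right (euclNorm_mulVec_le_sigmaMax L w) (euclNorm_nonneg x)
      _ = sigmaMax L * euclNorm x * euclNorm w := by ring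
  nlinarith [euclNorm_nonneg w, mul_nonneg (sigmaMax_nonneg L) (euclNorm_nonneg x)]

-- `‖x‖² = ⟪B x, Lᵀ x⟫ ≤ ‖B x‖ ‖Lᵀ x‖` and `σ_min(L) ‖B x‖ ≤ ‖L B x‖ = ‖x‖`
lemma sigmaMin_mul_le_euclNorm_transpose_mulVec {B : Matrix (Fin p) (Fin p) ℝ} (hB : L * B = 1)
    (x : Fin p → ℝ) : sigmaMin L * euclNorm x ≤ euclNorm (Lᵀ *ᵥ x) := by
  rcases eq_or_ne x 0 with rfl | hx
  · simp
  have hLB : sigmaMin L * euclNorm (B *ᵥ x) ≤ euclNorm x := by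
    simpa [mulVec_mulVec, hB] using sigmaMin_mul_le_euclNorm_mulVec L (B *ᵥ x)
  have h : euclNorm x ^ 2 ≤ euclNorm (B *ᵥ x) * euclNorm (Lᵀ *ᵥ x) :=
    calc euclNorm x ^ 2 = (B *ᵥ x) ⬝ᵥ (Lᵀ *ᵥ x) := by
          rw [euclNorm_sq, dotProduct_mulVec, vecMul_transpose, mulVec_mulVec, hB, one_mulVec]
      _ ≤ euclNorm (B *ᵥ x) * euclNorm (Lᵀ *ᵥ x) := (le_abs_self _).trans (abs_dotProduct_le _ _)
  refine le_of_mul_le_mul_right ?_ (euclNorm_pos hx)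
  calc sigmaMin L * euclNorm x * euclNorm x = sigmaMin L * euclNorm x ^ 2 := by ring
    _ ≤ sigmaMin L * (euclNorm (B *ᵥ x) * euclNorm (Lᵀ *ᵥ x)) := by
      gcongr; exact sigmaMin_nonneg L
    _ ≤ euclNorm x * euclNorm (Lᵀ *ᵥ x) := by
      rw [← mul_assoc]; exact mul_le_mul_of_nonneg_right hLB (euclNorm_nonneg _)
    _ = euclNorm (Lᵀ *ᵥ x) * euclNorm x := mul_comm _ _

end SingularValues

lemma Matrix.isUnit_of_isLowerTriangular {n R : Type*} [Fintype n] [DecidableEq n] [LinearOrder n]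
    [CommRing R] {L : Matrix n n R} (htri : L.IsLowerTriangular) (hdiag : ∀ i, L i i = 1) :
    IsUnit L := by
  rw [isUnit_iff_isUnit_det, det_of_isLowerTriangular L htri]
  simp [hdiag]

section Congruence

variable {p : ℕ}

def StretchBetween (M : Matrix (Fin p) (Fin p) ℝ) (c C : ℝ) : Prop :=
  ∀ x, c * euclNorm x ≤ euclNorm (M *ᵥ x) ∧ euclNorm (M *ᵥ x) ≤ C * euclNorm x

lemma stretchBetween_sigmaMin_sigmaMax {P L Q B : Matrix (Fin p) (Fin p) ℝ} (hP : Pᵀ * P = 1)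
    (hQ : Q * Qᵀ = 1) (hB : L * B = 1) :
    StretchBetween (Qᵀ * Lᵀ * P) (sigmaMin L) (sigmaMax L) := by
  intro x
  have hQ' : Qᵀᵀ * Qᵀ = 1 := by rwa [transpose_transpose]
  rw [← mulVec_mulVec, ← mulVec_mulVec, euclNorm_mulVec_of_transpose_mul_self hQ',
    ← euclNorm_mulVec_of_transpose_mul_self hP x]
  exact ⟨sigmaMin_mul_le_euclNorm_transpose_mulVec L hB _, euclNorm_transpose_mulVec_le L _⟩

lemma dotProduct_congr_diagonal (M : Matrix (Fin p) (Fin p) ℝ) (d x : Fin p → ℝ) :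
    x ⬝ᵥ (Mᵀ * diagonal d * M) *ᵥ x = ∑ j, d j * (M *ᵥ x) j ^ 2 := by
  rw [← mulVec_mulVec, ← mulVec_mulVec, dotProduct_mulVec, vecMul_transpose]
  simp only [dotProduct, mulVec_diagonal]
  exact Finset.sum_congr rfl fun j _ => by ring

namespace StretchBetween

variable {M : Matrix (Fin p) (Fin p) ℝ} {c C : ℝ}

lemma mulVec_surjective (hM : StretchBetween M c C) (hc : 0 < c) :
    Function.Surjective M.mulVec := by
  refine mulVec_surjective_iff_isUnit.2 (mulVec_injective_iff_isUnit.1 fun x y hxy => ?_)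
  have h := (hM (x - y)).1
  rw [mulVec_sub, hxy, sub_self, euclNorm_zero] at h
  by_contra hne
  nlinarith [euclNorm_pos (sub_ne_zero.2 hne)]

-- The quadratic form at the preimage of the `j`-th basis vector is `d j`.
lemma mem_Icc_of_rayleighBetween (hM : StretchBetween M c C) (hc : 0 < c) {d : Fin p → ℝ}
    {lo hi : ℝ} (hlo : 0 ≤ lo) (hA : RayleighBetween (Mᵀ * diagonal d * M) lo hi) (j : Fin p) :
    d j ∈ Set.Icc (lo / C ^ 2) (hi / c ^ 2) := by
  obtain ⟨x, hx⟩ := hM.mulVec_surjective hc (Pi.single j 1)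
  have hq : x ⬝ᵥ (Mᵀ * diagonal d * M) *ᵥ x = d j := by
    rw [dotProduct_congr_diagonal, hx, Finset.sum_eq_single j (fun i _ hi => by simp [hi])
      (by simp)]
    simp
  have he : euclNorm (M *ᵥ x) = 1 := by
    rw [hx, euclNorm, Finset.sum_eq_single j (fun i _ hi => by simp [hi]) (by simp)]
    simp
  have hxpos : 0 < euclNorm x := euclNorm_pos (by rintro rfl; simp at he)
  obtain ⟨hloj, hhij⟩ := hA x
  rw [hq] at hloj hhij
  obtain ⟨hcx, hCx⟩ := hM x
  rw [he] at hcx hCx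
  have hhi : 0 ≤ hi := nonneg_of_mul_nonneg_left
    ((mul_nonneg hlo (sq_nonneg _)).trans (hloj.trans hhij)) (pow_pos hxpos 2)
  constructor
  · have hC : 0 < C := pos_of_mul_pos_left (one_pos.trans_le hCx) hxpos.le
    calc lo / C ^ 2 ≤ lo * euclNorm x ^ 2 := by
          rw [div_le_iff₀ (by positivity)]
          nlinarith [mul_le_mul_of_nonneg_left (pow_le_pow_left₀ zero_le_one hCx 2) hlo]
      _ ≤ d j := hloj
  · calc d j ≤ hi * euclNorm x ^ 2 := hhij
      _ ≤ hi / c ^ 2 := by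
          rw [le_div_iff₀ (by positivity)]
          nlinarith [mul_le_mul_of_nonneg_left
            (pow_le_pow_left₀ (by positivity) hcx 2) hhi]

lemma rayleighBetween_diagonal (hM : StretchBetween M c C) (hc : 0 ≤ c) {f : Fin p → ℝ}
    {a b : ℝ} (ha : 0 ≤ a) (hb : 0 ≤ b) (hf : ∀ j, f j ∈ Set.Icc a b) :
    RayleighBetween (Mᵀ * diagonal f * M) (a * c ^ 2) (b * C ^ 2) := by
  intro x
  have hnorm : euclNorm (M *ᵥ x) ^ 2 = ∑ j, (M *ᵥ x) j ^ 2 := by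
    rw [euclNorm_sq]
    simp [dotProduct, sq]
  have hcx := pow_le_pow_left₀ (mul_nonneg hc (euclNorm_nonneg x)) (hM x).1 2
  have hCx := pow_le_pow_left₀ (euclNorm_nonneg _) (hM x).2 2
  rw [dotProduct_congr_diagonal]
  constructor
  · calc a * c ^ 2 * euclNorm x ^ 2 = a * (c * euclNorm x) ^ 2 := by ring
      _ ≤ a * euclNorm (M *ᵥ x) ^ 2 := mul_le_mul_of_nonneg_left hcx ha
      _ = ∑ j, a * (M *ᵥ x) j ^ 2 := by rw [hnorm, Finset.mul_sum]
      _ ≤ ∑ j, f j * (M *ᵥ x) j ^ 2 := Finset.sum_le_sum fun j _ =>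
          mul_le_mul_of_nonneg_right (hf j).1 (sq_nonneg _)
  · calc ∑ j, f j * (M *ᵥ x) j ^ 2 ≤ ∑ j, b * (M *ᵥ x) j ^ 2 := Finset.sum_le_sum fun j _ =>
          mul_le_mul_of_nonneg_right (hf j).2 (sq_nonneg _)
      _ = b * euclNorm (M *ᵥ x) ^ 2 := by rw [hnorm, Finset.mul_sum]
      _ ≤ b * (C * euclNorm x) ^ 2 := mul_le_mul_of_nonneg_left hCx hb
      _ = b * C ^ 2 * euclNorm x ^ 2 := by ring

end StretchBetween

end Congruence

lemma max_abs_mem_Icc {τ a b t : ℝ} (ha : 0 ≤ a) (ht : t ∈ Set.Icc a b) :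
    max τ |t| ∈ Set.Icc (max τ a) (max τ b) := by
  rw [abs_of_nonneg (ha.trans ht.1)]
  exact ⟨max_le_max_left τ ht.1, max_le_max_left τ ht.2⟩

theorem stmt13_general {p : ℕ} (P L Q : Matrix (Fin p) (Fin p) ℝ) (d : Fin p → ℝ)
    (τ lamLo lamHi : ℝ) (hτ : 0 < τ) (hlamLo : 0 < lamLo)
    (hP : ∃ e : Equiv.Perm (Fin p), P = e.permMatrix ℝ)
    (hLdiag : ∀ i, L i i = 1) (hLtri : ∀ i j : Fin p, i < j → L i j = 0)
    (hQ : Q * Qᵀ = 1)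
    (hlo : lamLo ≤ lambdaMin (Pᵀ * L * Q * Matrix.diagonal d * Qᵀ * Lᵀ * P))
    (hhi : lambdaMax (Pᵀ * L * Q * Matrix.diagonal d * Qᵀ * Lᵀ * P) ≤ lamHi) :
    lambdaMax (Pᵀ * L * Q * (Matrix.diagonal fun j => max τ |d j|) * Qᵀ * Lᵀ * P) /
        lambdaMin (Pᵀ * L * Q * (Matrix.diagonal fun j => max τ |d j|) * Qᵀ * Lᵀ * P) ≤
      sigmaMax L ^ 2 / sigmaMin L ^ 2 *
        (max τ (lamHi / sigmaMin L ^ 2) / max τ (lamLo / sigmaMax L ^ 2)) := by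
  obtain rfl | hp := p.eq_zero_or_pos
  · rw [show lambdaMax _ = 0 by simp [lambdaMax], zero_div]
    positivity
  have := NeZero.of_pos hp
  obtain ⟨e, rfl⟩ := hP
  have hPP : (e.permMatrix ℝ)ᵀ * e.permMatrix ℝ = 1 := by
    simp [transpose_permMatrix, ← permMatrix_mul]
  have hL : IsUnit L := isUnit_of_isLowerTriangular hLtri hLdiag
  obtain ⟨B, hLB⟩ := hL.exists_right_inv
  obtain ⟨B', hBL⟩ := hL.exists_left_inv
  set M := Qᵀ * Lᵀ * e.permMatrix ℝ
  have hH : ∀ f, (e.permMatrix ℝ)ᵀ * L * Q * diagonal f * Qᵀ * Lᵀ * e.permMatrix ℝ =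
      Mᵀ * diagonal f * M := fun f => by simp [M, transpose_mul, Matrix.mul_assoc]
  have hM : StretchBetween M (sigmaMin L) (sigmaMax L) :=
    stretchBetween_sigmaMin_sigmaMax hPP hQ hLB
  have hσ : 0 < sigmaMin L := sigmaMin_pos L hBL
  have hd := hM.mem_Icc_of_rayleighBetween hσ hlamLo.le
    (hH d ▸ rayleighBetween_of_le_lambdaMin hlo hhi)
  have hclip j := max_abs_mem_Icc (τ := τ) (by positivity) (hd j)
  rw [hH]
  calc _ ≤ max τ (lamHi / sigmaMin L ^ 2) * sigmaMax L ^ 2 /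
          (max τ (lamLo / sigmaMax L ^ 2) * sigmaMin L ^ 2) :=
        lambdaMax_div_lambdaMin_le _ (by positivity) <|
          hM.rayleighBetween_diagonal hσ.le (by positivity) (by positivity) hclip
    _ = _ := by field_simp

/-- Condition-number bound of Theorem 4 of the paper: with `H̄ = Pᵀ L Q Λ Qᵀ Lᵀ P`
positive definite, `λ_min(H̄) ≥ λ̲ > 0` and spectral norm `‖H̄‖₂ = λ_max(H̄) ≤ λ̄`
(`λ̲ ≤ λ̄`), and `H̄̄ = Pᵀ L Q Λ̄ Qᵀ Lᵀ P` the clipped version (`λ̄_j = max{τ, |λ_j|}`,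
`τ > 0`), the condition number `κ(H̄̄) = λ_max(H̄̄)/λ_min(H̄̄)` satisfies
`κ(H̄̄) ≤ (σ_max(L)²/σ_min(L)²) max{τ, λ̄/σ_min(L)²} / max{τ, λ̲/σ_max(L)²}`. -/
theorem stmt13 {p : ℕ} (P L Q : Matrix (Fin p) (Fin p) ℝ) (d : Fin p → ℝ)
    (τ lamLo lamHi : ℝ) (hτ : 0 < τ) (hlamLo : 0 < lamLo) (hlamLoHi : lamLo ≤ lamHi)
    (hP : ∃ e : Equiv.Perm (Fin p), P = e.permMatrix ℝ)
    (hLdiag : ∀ i, L i i = 1) (hLtri : ∀ i j : Fin p, i < j → L i j = 0)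
    (hQ : Q * Qᵀ = 1) (hQ' : Qᵀ * Q = 1)
    (hPD : (Pᵀ * L * Q * Matrix.diagonal d * Qᵀ * Lᵀ * P).PosDef)
    (hlo : lamLo ≤ lambdaMin (Pᵀ * L * Q * Matrix.diagonal d * Qᵀ * Lᵀ * P))
    (hhi : lambdaMax (Pᵀ * L * Q * Matrix.diagonal d * Qᵀ * Lᵀ * P) ≤ lamHi) :
    lambdaMax (Pᵀ * L * Q * (Matrix.diagonal fun j => max τ |d j|) * Qᵀ * Lᵀ * P) /
        lambdaMin (Pᵀ * L * Q * (Matrix.diagonal fun j => max τ |d j|) * Qᵀ * Lᵀ * P) ≤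
      sigmaMax L ^ 2 / sigmaMin L ^ 2 *
        (max τ (lamHi / sigmaMin L ^ 2) / max τ (lamLo / sigmaMax L ^ 2)) :=
  stmt13_general P L Q d τ lamLo lamHi hτ hlamLo hP hLdiag hLtri hQ hlo hhi
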